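/- There exists a Dedekind complete vector lattice E of dimension at least 2 and infinite E̅⁺-valued measures μ, ν on (ℕ, 2^ℕ) such that μ ∧ ν exists in the cone of E̅⁺-valued measures and equals the zero measure, yet the formula inf{μ(Γ) + ν(Δ∖Γ) : Γ ⊆ Δ} fails to give (μ∧ν)(Δ) for some Δ. Concretely: take disjoint nonzero x, y ∈ E⁺, μ(Δ) := |Δ|·x and ν(Δ) := |Δ|·y (with value ∞ when |Δ| is infinite); then μ ∧ ν = 0 but inf{μ(Γ) + ν(Δ∖Γ) : Γ ⊆ Δ} = ∞ whenever Δ is infinite. -/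

import Mathlib

open scoped Classical

variable {E : Type*} [Lattice E] [AddCommGroup E]
  [CovariantClass E E (· + ·) (· ≤ ·)]

/-- An `E̅⁺`-valued measure on `(ℕ, 2^ℕ)`, `E̅ = WithTop E`. -/
def IsEMeasure (μ : Set ℕ → WithTop E) : Prop :=
  μ ∅ = 0 ∧ (∀ Δ, MeasurableSet Δ → 0 ≤ μ Δ) ∧
    ∀ Δ : ℕ → Set ℕ, (∀ n, MeasurableSet (Δ n)) →
      Pairwise (Function.onFun Disjoint Δ) →
      IsLUB (Set.range fun N => ∑ n ∈ Finset.range N, μ (Δ n))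
        (μ (⋃ n, Δ n))

/-- The measure `Δ ↦ |Δ|·x`, with value `∞` for infinite `Δ`. -/
noncomputable def cardMeas (x : E) (Δ : Set ℕ) : WithTop E :=
  if h : Δ.Finite then ((h.toFinset.card • x : E) : WithTop E) else ⊤

/-!
The counting measures `|·|·x` and `|·|·y` are σ-additive because a Dedekind complete lattice
group is Archimedean: on an infinite union the finite partial sums `n • x` have no upper bound
in `E`. A measure below both is at most `x ⊓ y = 0` on every singleton, hence zero. But for an
infinite `Δ`, one of `Γ` and `Δ \ Γ` is infinite, so every `μ(Γ) + ν(Δ \ Γ)` equals `∞`.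
-/

open Set

lemma nonpos_of_forall_nsmul_le (hDed : ∀ T : Set E, T.Nonempty → BddAbove T → ∃ a, IsLUB T a)
    {x a : E} (h : ∀ n : ℕ, n • x ≤ a) : x ≤ 0 := by
  obtain ⟨s, hs⟩ := hDed (range fun n : ℕ => n • x) ⟨0 • x, 0, rfl⟩
    ⟨a, by rintro _ ⟨n, rfl⟩; exact h n⟩
  have hsx : s ≤ s - x := hs.2 <| by
    rintro _ ⟨n, rfl⟩
    exact le_sub_iff_add_le.2 (succ_nsmul x n ▸ hs.1 ⟨n + 1, rfl⟩)
  exact (add_le_iff_nonpos_right s).1 (le_sub_iff_add_le.1 hsx)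

lemma cardMeas_of_finite (x : E) {Δ : Set ℕ} (h : Δ.Finite) :
    cardMeas x Δ = ((Δ.ncard • x : E) : WithTop E) := by
  rw [cardMeas, dif_pos h, ncard_eq_toFinset_card Δ h]

lemma cardMeas_of_infinite (x : E) {Δ : Set ℕ} (h : Δ.Infinite) : cardMeas x Δ = ⊤ :=
  dif_neg h

lemma cardMeas_empty (x : E) : cardMeas x ∅ = 0 := by
  simp [cardMeas_of_finite x finite_empty]

lemma cardMeas_singleton (x : E) (n : ℕ) : cardMeas x {n} = x := by
  simp [cardMeas_of_finite x (finite_singleton n)]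

lemma cardMeas_nonneg {x : E} (hx : 0 ≤ x) (Δ : Set ℕ) : 0 ≤ cardMeas x Δ := by
  rcases Δ.finite_or_infinite with h | h
  · rw [cardMeas_of_finite x h]
    exact WithTop.coe_nonneg.2 (nsmul_nonneg hx _)
  · simp [cardMeas_of_infinite x h]

lemma cardMeas_mono {x : E} (hx : 0 ≤ x) {A B : Set ℕ} (hAB : A ⊆ B) :
    cardMeas x A ≤ cardMeas x B := by
  rcases B.finite_or_infinite with hB | hB
  · rw [cardMeas_of_finite x hB, cardMeas_of_finite x (hB.subset hAB), WithTop.coe_le_coe]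
    exact nsmul_le_nsmul_left hx (ncard_le_ncard hAB hB)
  · simp [cardMeas_of_infinite x hB]

lemma cardMeas_union (x : E) {A B : Set ℕ} (hAB : Disjoint A B) :
    cardMeas x (A ∪ B) = cardMeas x A + cardMeas x B := by
  rcases A.finite_or_infinite with hA | hA
  · rcases B.finite_or_infinite with hB | hB
    · rw [cardMeas_of_finite x (hA.union hB), cardMeas_of_finite x hA, cardMeas_of_finite x hB,
        ncard_union_eq hAB hA hB, add_nsmul, WithTop.coe_add]
    · rw [cardMeas_of_infinite x (hB.mono subset_union_right), cardMeas_of_infinite x hB,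
        WithTop.add_top]
  · rw [cardMeas_of_infinite x (hA.mono subset_union_left), cardMeas_of_infinite x hA,
      WithTop.top_add]

lemma sum_range_cardMeas (x : E) {Δ : ℕ → Set ℕ} (hΔ : Pairwise (Function.onFun Disjoint Δ))
    (N : ℕ) :
    ∑ n ∈ Finset.range N, cardMeas x (Δ n) = cardMeas x (⋃ n ∈ Finset.range N, Δ n) := by
  induction N with
  | zero => simp [cardMeas_empty]
  | succ N ih =>
    have hdisj : Disjoint (⋃ n ∈ Finset.range N, Δ n) (Δ N) :=
      disjoint_iUnion₂_left.2 fun n hn => hΔ (Finset.mem_range.1 hn).ne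
    rw [Finset.sum_range_succ, ih, Finset.range_add_one, Finset.set_biUnion_insert, union_comm,
      cardMeas_union x hdisj]

lemma isLUB_cardMeas_iUnion (hDed : ∀ T : Set E, T.Nonempty → BddAbove T → ∃ a, IsLUB T a)
    {x : E} (hx0 : 0 ≤ x) (hx : x ≠ 0) {S : ℕ → Set ℕ} (hS : Monotone S) :
    IsLUB (range fun N => cardMeas x (S N)) (cardMeas x (⋃ N, S N)) := by
  refine ⟨?_, fun b hb => ?_⟩
  · rintro _ ⟨N, rfl⟩
    exact cardMeas_mono hx0 (subset_iUnion S N)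
  have hfinset : ∀ T : Finset ℕ, ↑T ⊆ ⋃ N, S N → cardMeas x T ≤ b := fun T hT =>
    let ⟨N, hN⟩ := hS.directed_le.exists_mem_subset_of_finset_subset_biUnion hT
    (cardMeas_mono hx0 hN).trans (hb ⟨N, rfl⟩)
  rcases (⋃ N, S N).finite_or_infinite with hU | hU
  · simpa using hfinset hU.toFinset (by simp)
  rw [cardMeas_of_infinite x hU]
  induction b with
  | top => exact le_rfl
  | coe a =>
    refine absurd (le_antisymm (nonpos_of_forall_nsmul_le hDed (a := a) fun m => ?_) hx0) hx
    obtain ⟨T, hTU, hTm⟩ := hU.exists_subset_card_eq m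
    have hTa := hfinset T hTU
    rwa [cardMeas_of_finite x T.finite_toSet, ncard_coe_finset, hTm, WithTop.coe_le_coe] at hTa

lemma isEMeasure_cardMeas (hDed : ∀ T : Set E, T.Nonempty → BddAbove T → ∃ a, IsLUB T a)
    {x : E} (hx0 : 0 ≤ x) (hx : x ≠ 0) : IsEMeasure (cardMeas x) := by
  refine ⟨cardMeas_empty x, fun Δ _ => cardMeas_nonneg hx0 Δ, fun Δ _ hΔ => ?_⟩
  have hmono : Monotone fun N => ⋃ n ∈ Finset.range N, Δ n := fun M N hMN =>
    biUnion_subset_biUnion_left (Finset.coe_subset.2 (Finset.range_mono hMN))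
  have hunion : ⋃ N, ⋃ n ∈ Finset.range N, Δ n = ⋃ n, Δ n := by
    ext a
    simp only [mem_iUnion, Finset.mem_range]
    exact ⟨fun ⟨_, n, _, ha⟩ => ⟨n, ha⟩, fun ⟨n, ha⟩ => ⟨n + 1, n, n.lt_succ_self, ha⟩⟩
  simpa only [sum_range_cardMeas x hΔ, hunion] using isLUB_cardMeas_iUnion hDed hx0 hx hmono

lemma cardMeas_add_cardMeas_sdiff_eq_top (x y : E) {Δ : Set ℕ} (hΔ : Δ.Infinite)
    (Γ : Set ℕ) : cardMeas x Γ + cardMeas y (Δ \ Γ) = ⊤ := by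
  rcases Γ.finite_or_infinite with hΓ | hΓ
  · rw [cardMeas_of_infinite y (hΔ.sdiff hΓ), WithTop.add_top]
  · rw [cardMeas_of_infinite x hΓ, WithTop.top_add]

lemma IsEMeasure.eq_zero_of_forall_singleton {σ : Set ℕ → WithTop E} (hσ : IsEMeasure σ)
    (h : ∀ n, σ {n} = 0) (Δ : Set ℕ) : σ Δ = 0 := by
  have hpiece : ∀ n, σ (Δ ∩ {n}) = 0 := fun n => by
    by_cases hn : n ∈ Δ
    · rw [inter_singleton_of_mem hn, h n]
    · rw [inter_singleton_eq_empty.2 hn, hσ.1]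
  have hlub := hσ.2.2 (fun n => Δ ∩ {n}) (fun _ => .of_discrete) fun m n hmn =>
    (disjoint_singleton.2 hmn).mono inter_subset_right inter_subset_right
  rw [← inter_iUnion, iUnion_of_singleton, inter_univ] at hlub
  simp only [hpiece, Finset.sum_const_zero, range_const] at hlub
  exact hlub.unique isLUB_singleton

lemma IsEMeasure.eq_zero_of_le_cardMeas_of_le_cardMeas {σ : Set ℕ → WithTop E}
    (hσ : IsEMeasure σ) {x y : E} (hxy : x ⊓ y = 0)
    (hσx : ∀ Δ, MeasurableSet Δ → σ Δ ≤ cardMeas x Δ)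
    (hσy : ∀ Δ, MeasurableSet Δ → σ Δ ≤ cardMeas y Δ) (Δ : Set ℕ) : σ Δ = 0 := by
  refine hσ.eq_zero_of_forall_singleton (fun n => le_antisymm ?_ (hσ.2.1 _ .of_discrete)) Δ
  calc σ {n} ≤ (x : WithTop E) ⊓ y := le_inf
        (cardMeas_singleton x n ▸ hσx {n} .of_discrete)
        (cardMeas_singleton y n ▸ hσy {n} .of_discrete)
    _ = 0 := by rw [← WithTop.coe_inf, hxy, WithTop.coe_zero]

/-- for a Dedekind complete vector lattice `E` with two disjoint
nonzero positive elements `x, y`, the infinite measures `μ = |·|·x` and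
`ν = |·|·y` on `(ℕ, 2^ℕ)` have infimum `0` in the cone of `E̅⁺`-valued
measures, yet `inf {μ(Γ) + ν(Δ∖Γ) : Γ ⊆ Δ} = ∞` whenever `Δ` is infinite, so
the infimum formula fails for infinite measures. -/
theorem stmt_12
    (hDed : ∀ T : Set E, T.Nonempty → BddAbove T → ∃ a, IsLUB T a)
    (x y : E) (hx0 : 0 ≤ x) (hx : x ≠ 0) (hy0 : 0 ≤ y) (hy : y ≠ 0)
    (hdisj : x ⊓ y = 0) :
    IsEMeasure (cardMeas x) ∧ IsEMeasure (cardMeas y) ∧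
      cardMeas x Set.univ = ⊤ ∧ cardMeas y Set.univ = ⊤ ∧
      IsEMeasure (fun _ : Set ℕ => (0 : WithTop E)) ∧
      (∀ σ : Set ℕ → WithTop E, IsEMeasure σ →
        (∀ Δ, MeasurableSet Δ → σ Δ ≤ cardMeas x Δ) →
        (∀ Δ, MeasurableSet Δ → σ Δ ≤ cardMeas y Δ) →
        ∀ Δ, MeasurableSet Δ → σ Δ = 0) ∧
      ∀ Δ : Set ℕ, Δ.Infinite →
        IsGLB {z : WithTop E | ∃ Γ, MeasurableSet Γ ∧ Γ ⊆ Δ ∧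
          z = cardMeas x Γ + cardMeas y (Δ \ Γ)} ⊤ := by
  refine ⟨isEMeasure_cardMeas hDed hx0 hx, isEMeasure_cardMeas hDed hy0 hy,
    cardMeas_of_infinite x infinite_univ, cardMeas_of_infinite y infinite_univ,
    ⟨rfl, fun _ _ => le_rfl, fun _ _ _ => by simp [isLUB_singleton]⟩,
    fun σ hσ hσx hσy Δ _ => hσ.eq_zero_of_le_cardMeas_of_le_cardMeas hdisj hσx hσy Δ,
    fun Δ hΔ => ⟨?_, fun _ _ => le_top⟩⟩
  rintro _ ⟨Γ, -, -, rfl⟩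
  exact (cardMeas_add_cardMeas_sdiff_eq_top x y hΔ Γ).ge
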